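/- In the point-treatment proximal setting with binary A, suppose h satisfies the outcome bridge equation with respect to U (E[Y|A=a,U,X] = E[h(W,a,X)|A=a,U,X]) and q satisfies the treatment bridge equation with respect to U (1/P(A=a|U,X) = E[q(Z,a,X)|A=a,U,X]), with Z ⟂ (W, Y) | (A, U, X), W ⟂ (Z, A) | (U, X), latent ignorability Y_a ⟂ (A,Z) | (U,X), consistency and positivity. Then the doubly robust functional satisfies E[ 1{A=a} q(Z,a,X) (Y − h(W,a,X)) + h(W,a,X) ] = E[Y_a]. -/

import Mathlib

open Finset MeasureTheory

open scoped Classical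

/-- Probability of an event on a finite outcome space with mass function `p`. -/
noncomputable def pr {Ω : Type*} [Fintype Ω] (p : Ω → ℝ) (E : Ω → Prop) : ℝ :=
  ∑ ω, if E ω then p ω else 0

/-- Conditional expectation `E[f | E]` on a finite outcome space. -/
noncomputable def cexp {Ω : Type*} [Fintype Ω] (p : Ω → ℝ) (f : Ω → ℝ) (E : Ω → Prop) : ℝ :=
  (∑ ω, if E ω then p ω * f ω else 0) / pr p E

/-- Conditional probability `P(E | F)` on a finite outcome space. -/
noncomputable def cprob {Ω : Type*} [Fintype Ω] (p : Ω → ℝ) (E F : Ω → Prop) : ℝ :=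
  pr p (fun ω => E ω ∧ F ω) / pr p F

/-- Expectation on a finite outcome space. -/
noncomputable def pexp {Ω : Type*} [Fintype Ω] (p : Ω → ℝ) (f : Ω → ℝ) : ℝ :=
  ∑ ω, p ω * f ω

/-- `S` is conditionally independent of `T` given `C`:  for every pair of (bounded) test
functions `F, G` and every value `c` of `C` with positive probability, the conditional
expectation of the product factorizes. -/
def CondIndep {Ω α β γ : Type*} [Fintype Ω] (p : Ω → ℝ)
    (S : Ω → α) (T : Ω → β) (C : Ω → γ) : Prop :=
  ∀ (F : α → ℝ) (G : β → ℝ) (c : γ), pr p (fun ω => C ω = c) ≠ 0 →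
    cexp p (fun ω => F (S ω) * G (T ω)) (fun ω => C ω = c) =
      cexp p (fun ω => F (S ω)) (fun ω => C ω = c) *
        cexp p (fun ω => G (T ω)) (fun ω => C ω = c)

/-!
On a latent stratum `(U, X) = (u, x)` the weight `K = 1{A=a} q(Z,a,X)` has conditional mean
`P(A=a | u,x) · E[q | A=a,u,x] = 1` by the treatment bridge. Being a function of `(A, Z)`, it is
conditionally independent of `Y_a` (latent ignorability) and of `h(W,a,X)` (since `W ⟂ (Z,A)`).
Hence, after replacing `Y` by `Y_a` where `A = a` (consistency), the conditional mean of
`K (Y_a − h) + h` on the stratum is `E[Y_a] − E[h] + E[h] = E[Y_a]`; averaging over the strata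
gives the identity.
-/

section FiniteExpectation

variable {Ω : Type*} [Fintype Ω] {p : Ω → ℝ}

theorem cexp_congr {f g : Ω → ℝ} {E : Ω → Prop} (hfg : ∀ ω, E ω → f ω = g ω) :
    cexp p f E = cexp p g E := by
  unfold cexp
  congr 1
  refine Finset.sum_congr rfl fun ω _ => ?_
  split_ifs with hω
  · rw [hfg ω hω]
  · rfl

theorem cexp_add (f g : Ω → ℝ) (E : Ω → Prop) :
    cexp p (fun ω => f ω + g ω) E = cexp p f E + cexp p g E := by
  simp only [cexp, ← add_div, ← Finset.sum_add_distrib]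
  congr 1
  refine Finset.sum_congr rfl fun ω _ => ?_
  split_ifs <;> ring

theorem cexp_sub (f g : Ω → ℝ) (E : Ω → Prop) :
    cexp p (fun ω => f ω - g ω) E = cexp p f E - cexp p g E := by
  simp only [cexp, ← sub_div, ← Finset.sum_sub_distrib]
  congr 1
  refine Finset.sum_congr rfl fun ω _ => ?_
  split_ifs <;> ring

theorem pr_mul_cexp (hp : ∀ ω, 0 ≤ p ω) (f : Ω → ℝ) (E : Ω → Prop) :
    pr p E * cexp p f E = ∑ ω, if E ω then p ω * f ω else 0 := by
  by_cases hE : pr p E = 0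
  · have hnull : ∀ ω, E ω → p ω = 0 := fun ω hω => by
      have := (Finset.sum_eq_zero_iff_of_nonneg fun ω _ => ite_nonneg (hp ω) le_rfl).1 hE ω
        (Finset.mem_univ ω)
      simpa [hω] using this
    rw [hE, zero_mul, eq_comm]
    refine Finset.sum_eq_zero fun ω _ => ?_
    split_ifs with hω
    · rw [hnull ω hω, zero_mul]
    · rfl
  · exact mul_div_cancel₀ _ hE

theorem pexp_eq_sum_pr_mul_cexp {γ : Type*} (hp : ∀ ω, 0 ≤ p ω) (f : Ω → ℝ)
    (C : Ω → γ) :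
    pexp p f =
      ∑ c ∈ Finset.univ.image C, pr p (fun ω => C ω = c) * cexp p f (fun ω => C ω = c) := by
  simp only [pr_mul_cexp hp, pexp, ← Finset.sum_filter]
  exact (Finset.sum_fiberwise_of_maps_to
    (fun ω _ => Finset.mem_image_of_mem C (Finset.mem_univ ω)) _).symm

theorem pexp_eq_of_cexp_eq {γ : Type*} (hp : ∀ ω, 0 ≤ p ω) {f g : Ω → ℝ} (C : Ω → γ)
    (hfg : ∀ c, pr p (fun ω => C ω = c) ≠ 0 →
      cexp p f (fun ω => C ω = c) = cexp p g (fun ω => C ω = c)) :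
    pexp p f = pexp p g := by
  rw [pexp_eq_sum_pr_mul_cexp hp f C, pexp_eq_sum_pr_mul_cexp hp g C]
  refine Finset.sum_congr rfl fun c _ => ?_
  by_cases hc : pr p (fun ω => C ω = c) = 0
  · rw [hc, zero_mul, zero_mul]
  · rw [hfg c hc]

theorem cexp_indicator_mul {B E : Ω → Prop} [DecidablePred B] (f : Ω → ℝ)
    (hBE : pr p (fun ω => B ω ∧ E ω) ≠ 0) :
    cexp p (fun ω => (if B ω then 1 else 0) * f ω) E =
      cprob p B E * cexp p f (fun ω => B ω ∧ E ω) := by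
  rw [cexp, cexp, cprob, div_mul_div_comm, mul_comm (pr p _), mul_div_mul_right _ _ hBE]
  congr 1
  refine Finset.sum_congr rfl fun ω _ => ?_
  by_cases hB : B ω <;> by_cases hE : E ω <;> simp [hB, hE]

theorem cexp_indicator_mul_eq_one {B E : Ω → Prop} [DecidablePred B] {f : Ω → ℝ}
    (hpos : 0 < cprob p B E)
    (hbridge : pr p (fun ω => B ω ∧ E ω) ≠ 0 →
      (cprob p B E)⁻¹ = cexp p f (fun ω => B ω ∧ E ω)) :
    cexp p (fun ω => (if B ω then 1 else 0) * f ω) E = 1 := by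
  have hBE : pr p (fun ω => B ω ∧ E ω) ≠ 0 := fun h0 => by
    rw [cprob, h0, zero_div] at hpos
    exact lt_irrefl 0 hpos
  rw [cexp_indicator_mul f hBE, ← hbridge hBE, mul_inv_cancel₀ hpos.ne']

theorem cexp_mul_sub_add_eq {K Y H : Ω → ℝ} {E : Ω → Prop} (hK : cexp p K E = 1)
    (hY : cexp p (fun ω => Y ω * K ω) E = cexp p Y E * cexp p K E)
    (hH : cexp p (fun ω => H ω * K ω) E = cexp p H E * cexp p K E) :
    cexp p (fun ω => K ω * (Y ω - H ω) + H ω) E = cexp p Y E :=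
  calc cexp p (fun ω => K ω * (Y ω - H ω) + H ω) E
      = cexp p (fun ω => Y ω * K ω) E - cexp p (fun ω => H ω * K ω) E + cexp p H E := by
        rw [← cexp_sub, ← cexp_add]
        exact cexp_congr fun ω _ => by ring
    _ = cexp p Y E := by rw [hY, hH, hK]; ring

theorem CondIndep.cexp_mul {α β γ : Type*} {S : Ω → α} {T : Ω → β} {C : Ω → γ}
    (hST : CondIndep p S T C) (F : γ → α → ℝ) (G : γ → β → ℝ) (c : γ)
    (hc : pr p (fun ω => C ω = c) ≠ 0) :
    cexp p (fun ω => F (C ω) (S ω) * G (C ω) (T ω)) (fun ω => C ω = c) =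
      cexp p (fun ω => F (C ω) (S ω)) (fun ω => C ω = c) *
        cexp p (fun ω => G (C ω) (T ω)) (fun ω => C ω = c) :=
  calc _ = cexp p (fun ω => F c (S ω) * G c (T ω)) (fun ω => C ω = c) :=
        cexp_congr fun ω hω => by rw [hω]
    _ = _ := hST (F c) (G c) c hc
    _ = _ := by congr 1 <;> exact cexp_congr fun ω hω => by rw [hω]

end FiniteExpectation

theorem stmt_18_general {Ω 𝒰 𝒵 𝒳 𝒲 : Type*} [Fintype Ω]
    (p : Ω → ℝ) (hp : ∀ ω, 0 ≤ p ω)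
    (U : Ω → 𝒰) (Z : Ω → 𝒵) (X : Ω → 𝒳) (W : Ω → 𝒲) (A : Ω → Bool)
    (Y : Ω → ℝ) (Y' : Bool → Ω → ℝ)
    (h : 𝒲 → Bool → 𝒳 → ℝ) (q : 𝒵 → Bool → 𝒳 → ℝ)
    (hcons : ∀ ω, Y ω = Y' (A ω) ω)
    (hpos : ∀ (a : Bool) u x, pr p (fun ω => U ω = u ∧ X ω = x) ≠ 0 →
      0 < cprob p (fun ω => A ω = a) (fun ω => U ω = u ∧ X ω = x))
    (hWCI : CondIndep p W (fun ω => (Z ω, A ω)) (fun ω => (U ω, X ω)))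
    (hLI : ∀ a : Bool,
      CondIndep p (fun ω => Y' a ω) (fun ω => (A ω, Z ω)) (fun ω => (U ω, X ω)))
    (hbridgeq : ∀ (a : Bool) u x, pr p (fun ω => A ω = a ∧ U ω = u ∧ X ω = x) ≠ 0 →
      (cprob p (fun ω => A ω = a) (fun ω => U ω = u ∧ X ω = x))⁻¹ =
        cexp p (fun ω => q (Z ω) a (X ω)) (fun ω => A ω = a ∧ U ω = u ∧ X ω = x)) :
    ∀ a : Bool,
      pexp p (fun ω =>
        (if A ω = a then (1 : ℝ) else 0) * q (Z ω) a (X ω) *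
            (Y ω - h (W ω) a (X ω)) + h (W ω) a (X ω)) =
        pexp p (Y' a) := by
  intro a
  have hobs : ∀ ω,
      (if A ω = a then (1 : ℝ) else 0) * Y ω = (if A ω = a then 1 else 0) * Y' a ω :=
    fun ω => by split_ifs with hA <;> simp [hcons, hA]
  refine pexp_eq_of_cexp_eq hp (fun ω => (U ω, X ω)) fun ⟨u, x⟩ hc => ?_
  have hK : cexp p (fun ω => (if A ω = a then (1 : ℝ) else 0) * q (Z ω) a (X ω))
      (fun ω => (U ω, X ω) = (u, x)) = 1 := by
    simp only [Prod.mk.injEq] at hc ⊢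
    exact cexp_indicator_mul_eq_one (hpos a u x hc) (hbridgeq a u x)
  calc _ = cexp p (fun ω => (if A ω = a then (1 : ℝ) else 0) * q (Z ω) a (X ω) *
          (Y' a ω - h (W ω) a (X ω)) + h (W ω) a (X ω)) _ :=
        cexp_congr fun ω _ => by linear_combination q (Z ω) a (X ω) * hobs ω
    _ = _ := cexp_mul_sub_add_eq hK
      ((hLI a).cexp_mul (fun _ y => y)
        (fun c t => (if t.1 = a then 1 else 0) * q t.2 a c.2) _ hc)
      (hWCI.cexp_mul (fun c w => h w a c.2)
        (fun c t => (if t.2 = a then 1 else 0) * q t.1 a c.2) _ hc)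

/-- point-treatment proximal doubly robust identification: when `h` is a
valid outcome confounding bridge and `q` a valid treatment confounding bridge (both at
the latent level), the doubly robust functional recovers the counterfactual mean:
`E[1{A=a} q(Z,a,X)(Y − h(W,a,X)) + h(W,a,X)] = E[Y_a]`. -/
theorem stmt_18 {Ω 𝒰 𝒵 𝒳 𝒲 : Type*} [Fintype Ω]
    (p : Ω → ℝ) (hp : ∀ ω, 0 ≤ p ω) (hsum : ∑ ω, p ω = 1)
    (U : Ω → 𝒰) (Z : Ω → 𝒵) (X : Ω → 𝒳) (W : Ω → 𝒲) (A : Ω → Bool)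
    (Y : Ω → ℝ) (Y' : Bool → Ω → ℝ)
    (h : 𝒲 → Bool → 𝒳 → ℝ) (q : 𝒵 → Bool → 𝒳 → ℝ)
    (hcons : ∀ ω, Y ω = Y' (A ω) ω)
    (hpos : ∀ (a : Bool) u x, pr p (fun ω => U ω = u ∧ X ω = x) ≠ 0 →
      0 < cprob p (fun ω => A ω = a) (fun ω => U ω = u ∧ X ω = x))
    (hZCI : ∀ a : Bool,
      CondIndep p Z (fun ω => (W ω, Y' a ω)) (fun ω => (A ω, U ω, X ω)))
    (hWCI : CondIndep p W (fun ω => (Z ω, A ω)) (fun ω => (U ω, X ω)))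
    (hLI : ∀ a : Bool,
      CondIndep p (fun ω => Y' a ω) (fun ω => (A ω, Z ω)) (fun ω => (U ω, X ω)))
    (hbridgeh : ∀ (a : Bool) u x, pr p (fun ω => A ω = a ∧ U ω = u ∧ X ω = x) ≠ 0 →
      cexp p Y (fun ω => A ω = a ∧ U ω = u ∧ X ω = x) =
        cexp p (fun ω => h (W ω) a (X ω)) (fun ω => A ω = a ∧ U ω = u ∧ X ω = x))
    (hbridgeq : ∀ (a : Bool) u x, pr p (fun ω => A ω = a ∧ U ω = u ∧ X ω = x) ≠ 0 →
      (cprob p (fun ω => A ω = a) (fun ω => U ω = u ∧ X ω = x))⁻¹ =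
        cexp p (fun ω => q (Z ω) a (X ω)) (fun ω => A ω = a ∧ U ω = u ∧ X ω = x)) :
    ∀ a : Bool,
      pexp p (fun ω =>
        (if A ω = a then (1 : ℝ) else 0) * q (Z ω) a (X ω) *
            (Y ω - h (W ω) a (X ω)) + h (W ω) a (X ω)) =
        pexp p (Y' a) :=
  stmt_18_general p hp U Z X W A Y Y' h q hcons hpos hWCI hLI hbridgeq
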